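/- Let f_A, f_R : [0,∞) → ℝ be continuous with f_A(ρ) < 0 for all ρ > 0, f_R ≥ 0, and f_R(ρ) > 0 for all ρ ∈ [0,d_a) for some d_a > 0. Let R ≥ 0 and r ≥ 0 with R + r > 0, and define H(R,r,χ) = ∫_{π/2}^{3π/2} (χ f_A + f_R)(w₃(φ,R,r)) (R+r)(1 − sin φ) w₂(φ,R,r) dφ for χ ∈ ℝ. Then H(R,r,·) is an affine, strictly decreasing function of χ with H(R,r,0) > 0, and if H(R,r,1) < 0 there exists a unique χ ∈ (0,1) with H(R,r,χ) = 0. -/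

import Mathlib

/-!
Splitting the integrand gives `H(R,r,χ) = a χ + b` with `a = ∫ f_A(w₃) k` and `b = ∫ f_R(w₃) k`,
where the kernel `k(φ) = (R+r)(1 - sin φ) w₂(φ)` is nonnegative, and positive on `(π/2, 3π/2)`.
There `w₃ > 0`, so `a < 0`. Since `w₃(π/2) = 0 < d_a`, the factor `f_R(w₃)` is positive just to
the right of `π/2`, so `b > 0`. An affine function with negative slope, positive at `0` and
negative at `1`, has exactly one zero in `(0,1)`.
-/

open Real

/-- `w₂(φ,R,r) = √(R² sin² φ + (R+r)² cos² φ)`. -/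
noncomputable def w2 (φ R r : ℝ) : ℝ :=
  Real.sqrt (R ^ 2 * Real.sin φ ^ 2 + (R + r) ^ 2 * Real.cos φ ^ 2)

/-- `w₃(φ,R,r) = √(R² cos² φ + (R+r)²(1 − sin φ)²)`. -/
noncomputable def w3 (φ R r : ℝ) : ℝ :=
  Real.sqrt (R ^ 2 * Real.cos φ ^ 2 + (R + r) ^ 2 * (1 - Real.sin φ) ^ 2)

/-- `H(R,r,χ) = ∫_{π/2}^{3π/2} (χ f_A + f_R)(w₃(φ,R,r)) (R+r)(1 − sin φ) w₂(φ,R,r) dφ`. -/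
noncomputable def Hfun (fA fR : ℝ → ℝ) (R r χ : ℝ) : ℝ :=
  ∫ φ in (Real.pi / 2)..(3 * Real.pi / 2),
    (χ * fA (w3 φ R r) + fR (w3 φ R r)) * ((R + r) * (1 - Real.sin φ)) * w2 φ R r

open Set Filter Topology

namespace EllipseStationarity

noncomputable def kernel (R r φ : ℝ) : ℝ :=
  (R + r) * (1 - sin φ) * w2 φ R r

noncomputable def Hcoeff (f : ℝ → ℝ) (R r : ℝ) : ℝ :=
  ∫ φ in (π / 2)..(3 * π / 2), f (w3 φ R r) * kernel R r φ

section Geometry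

variable {R r φ : ℝ}

theorem continuous_w2 (R r : ℝ) : Continuous fun φ => w2 φ R r := by
  unfold w2; fun_prop

theorem continuous_w3 (R r : ℝ) : Continuous fun φ => w3 φ R r := by
  unfold w3; fun_prop

theorem continuous_kernel (R r : ℝ) : Continuous (kernel R r) := by
  unfold kernel; have := continuous_w2 R r; fun_prop

theorem w3_nonneg (φ R r : ℝ) : 0 ≤ w3 φ R r := sqrt_nonneg _

theorem w3_pi_div_two (R r : ℝ) : w3 (π / 2) R r = 0 := by
  simp [w3]

theorem cos_neg_of_mem_Ioo (hφ : φ ∈ Ioo (π / 2) (3 * π / 2)) : cos φ < 0 :=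
  cos_neg_of_pi_div_two_lt_of_lt hφ.1 (by linarith [hφ.2])

theorem sin_lt_one_of_mem_Ioo (hφ : φ ∈ Ioo (π / 2) (3 * π / 2)) : sin φ < 1 := by
  have := cos_neg_of_mem_Ioo hφ
  nlinarith [sin_sq_add_cos_sq φ, neg_one_le_sin φ]

theorem w2_pos (hRr : 0 < R + r) (hφ : φ ∈ Ioo (π / 2) (3 * π / 2)) : 0 < w2 φ R r := by
  have := mul_pos (pow_pos hRr 2) (pow_pos (neg_pos.2 (cos_neg_of_mem_Ioo hφ)) 2)
  exact sqrt_pos.2 (by nlinarith [sq_nonneg (R * sin φ)])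

theorem w3_pos (hRr : 0 < R + r) (hφ : φ ∈ Ioo (π / 2) (3 * π / 2)) : 0 < w3 φ R r := by
  have := mul_pos (pow_pos hRr 2) (pow_pos (sub_pos.2 (sin_lt_one_of_mem_Ioo hφ)) 2)
  exact sqrt_pos.2 (by nlinarith [sq_nonneg (R * cos φ)])

theorem kernel_nonneg (hRr : 0 ≤ R + r) (φ : ℝ) : 0 ≤ kernel R r φ :=
  mul_nonneg (mul_nonneg hRr (sub_nonneg.2 (sin_le_one φ))) (sqrt_nonneg _)

theorem kernel_pos (hRr : 0 < R + r) (hφ : φ ∈ Ioo (π / 2) (3 * π / 2)) :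
    0 < kernel R r φ :=
  mul_pos (mul_pos hRr (sub_pos.2 (sin_lt_one_of_mem_Ioo hφ))) (w2_pos hRr hφ)

end Geometry

section Hcoeff

variable {f : ℝ → ℝ} {R r : ℝ}

theorem continuous_comp_w3 (hf : ContinuousOn f (Ici 0)) (R r : ℝ) :
    Continuous fun φ => f (w3 φ R r) :=
  hf.comp_continuous (continuous_w3 R r) fun φ => w3_nonneg φ R r

theorem continuous_Hcoeff_integrand (hf : ContinuousOn f (Ici 0)) (R r : ℝ) :
    Continuous fun φ => f (w3 φ R r) * kernel R r φ :=
  (continuous_comp_w3 hf R r).mul (continuous_kernel R r)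

theorem Hfun_eq {fA fR : ℝ → ℝ} (hfA : ContinuousOn fA (Ici 0))
    (hfR : ContinuousOn fR (Ici 0)) (R r χ : ℝ) :
    Hfun fA fR R r χ = Hcoeff fA R r * χ + Hcoeff fR R r := by
  have hsplit : (fun φ => (χ * fA (w3 φ R r) + fR (w3 φ R r)) * ((R + r) * (1 - sin φ))
      * w2 φ R r) = fun φ => χ * (fA (w3 φ R r) * kernel R r φ) + fR (w3 φ R r) * kernel R r φ := by
    funext φ; unfold kernel; ring
  rw [Hfun, hsplit, intervalIntegral.integral_add
      (((continuous_Hcoeff_integrand hfA R r).intervalIntegrable _ _).const_mul χ)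
      ((continuous_Hcoeff_integrand hfR R r).intervalIntegrable _ _),
    intervalIntegral.integral_const_mul, Hcoeff, Hcoeff, mul_comm]

theorem Hcoeff_neg (hf : ContinuousOn f (Ici 0)) (hneg : ∀ ρ : ℝ, 0 < ρ → f ρ < 0)
    (hRr : 0 < R + r) : Hcoeff f R r < 0 := by
  have hpos : 0 < ∫ φ in (π / 2)..(3 * π / 2), -(f (w3 φ R r) * kernel R r φ) :=
    intervalIntegral.intervalIntegral_pos_of_pos_on
      ((continuous_Hcoeff_integrand hf R r).neg.intervalIntegrable _ _)
      (fun φ hφ => neg_pos.2 <| mul_neg_of_neg_of_pos (hneg _ (w3_pos hRr hφ)) (kernel_pos hRr hφ))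
      (by linarith [pi_pos])
  rw [intervalIntegral.integral_neg] at hpos
  exact neg_pos.1 hpos

theorem Hcoeff_pos (hf : ContinuousOn f (Ici 0)) (hnonneg : ∀ ρ ∈ Ici (0 : ℝ), 0 ≤ f ρ)
    {da : ℝ} (hda : 0 < da) (hpos : ∀ ρ ∈ Ico (0 : ℝ) da, 0 < f ρ) (hRr : 0 < R + r) :
    0 < Hcoeff f R r := by
  have hab : π / 2 < 3 * π / 2 := by linarith [pi_pos]
  have hsmall : ∀ᶠ φ in 𝓝[>] (π / 2), w3 φ R r < da :=
    nhdsWithin_le_nhds <| (continuous_w3 R r).continuousAt.eventually_lt continuousAt_const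
      (by rwa [w3_pi_div_two])
  obtain ⟨c, hc_small, hc⟩ := (hsmall.and (Ioo_mem_nhdsGT hab)).exists
  refine intervalIntegral.integral_pos hab (continuous_Hcoeff_integrand hf R r).continuousOn
    (fun φ _ => mul_nonneg (hnonneg _ (w3_nonneg φ R r)) (kernel_nonneg hRr.le φ))
    ⟨c, Ioo_subset_Icc_self hc, mul_pos ?_ (kernel_pos hRr hc)⟩
  exact hpos _ ⟨w3_nonneg c R r, hc_small⟩

end Hcoeff

theorem existsUnique_mem_Ioo_affine_eq_zero {a b : ℝ} (ha : a < 0) (hb : 0 < b)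
    (h1 : a + b < 0) : ∃! χ : ℝ, χ ∈ Ioo (0 : ℝ) 1 ∧ a * χ + b = 0 := by
  refine ⟨-b / a, ⟨⟨div_pos_of_neg_of_neg (neg_neg_of_pos hb) ha, ?_⟩, ?_⟩, ?_⟩
  · rw [div_lt_one_of_neg ha]; linarith
  · rw [mul_div_cancel₀ _ ha.ne, neg_add_cancel]
  · rintro χ ⟨-, hχ⟩
    rw [eq_div_iff ha.ne]; linarith

end EllipseStationarity

open EllipseStationarity

theorem H_affine_strictAnti_unique_zero_general
    (fA fR : ℝ → ℝ)
    (hfA : ContinuousOn fA (Set.Ici 0)) (hfR : ContinuousOn fR (Set.Ici 0))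
    (hfAneg : ∀ ρ : ℝ, 0 < ρ → fA ρ < 0)
    (hfRnonneg : ∀ ρ ∈ Set.Ici (0:ℝ), 0 ≤ fR ρ)
    (da : ℝ) (hda : 0 < da)
    (hfRpos : ∀ ρ ∈ Set.Ico (0:ℝ) da, 0 < fR ρ)
    (R r : ℝ) (hRr : 0 < R + r) :
    (∃ a b : ℝ, a < 0 ∧ ∀ χ : ℝ, Hfun fA fR R r χ = a * χ + b)
      ∧ StrictAnti (fun χ => Hfun fA fR R r χ)
      ∧ 0 < Hfun fA fR R r 0
      ∧ (Hfun fA fR R r 1 < 0 →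
          ∃! χ : ℝ, χ ∈ Set.Ioo (0:ℝ) 1 ∧ Hfun fA fR R r χ = 0) := by
  have ha := Hcoeff_neg hfA hfAneg hRr
  have hb := Hcoeff_pos hfR hfRnonneg hda hfRpos hRr
  simp only [Hfun_eq hfA hfR]
  refine ⟨⟨_, _, ha, fun _ => rfl⟩, fun x y hxy => ?_, by simpa using hb,
    fun h1 => existsUnique_mem_Ioo_affine_eq_zero ha hb (by simpa using h1)⟩
  exact add_lt_add_left (mul_lt_mul_of_neg_left hxy ha) _

/-- For continuous `f_A` (negative on `(0,∞)`) and `f_R ≥ 0`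
(positive on `[0,d_a)`), and `R, r ≥ 0` with `R + r > 0`, the function
`χ ↦ H(R,r,χ)` is affine and strictly decreasing, `H(R,r,0) > 0`, and if
`H(R,r,1) < 0` there is a unique `χ ∈ (0,1)` with `H(R,r,χ) = 0`. -/
theorem H_affine_strictAnti_unique_zero
    (fA fR : ℝ → ℝ)
    (hfA : ContinuousOn fA (Set.Ici 0)) (hfR : ContinuousOn fR (Set.Ici 0))
    (hfAneg : ∀ ρ : ℝ, 0 < ρ → fA ρ < 0)
    (hfRnonneg : ∀ ρ ∈ Set.Ici (0:ℝ), 0 ≤ fR ρ)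
    (da : ℝ) (hda : 0 < da)
    (hfRpos : ∀ ρ ∈ Set.Ico (0:ℝ) da, 0 < fR ρ)
    (R r : ℝ) (hR : 0 ≤ R) (hr : 0 ≤ r) (hRr : 0 < R + r) :
    (∃ a b : ℝ, a < 0 ∧ ∀ χ : ℝ, Hfun fA fR R r χ = a * χ + b)
      ∧ StrictAnti (fun χ => Hfun fA fR R r χ)
      ∧ 0 < Hfun fA fR R r 0
      ∧ (Hfun fA fR R r 1 < 0 →
          ∃! χ : ℝ, χ ∈ Set.Ioo (0:ℝ) 1 ∧ Hfun fA fR R r χ = 0) :=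
  H_affine_strictAnti_unique_zero_general fA fR hfA hfR hfAneg hfRnonneg da hda hfRpos R r hRr
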